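/- The function q(b) = (1/2)[b² - K(b)² + K(b)(b - a(b)) - K(b)² log(b/a(b))], where K(b) = -(e-1)b(b²e - 2)/(2 + (e-2)b²e) and a(b) = (b²e - 2)/((e-1)b), is continuous and strictly decreasing on the interval (√(2/e), √2), with limit 1/e as b → √(2/e)⁺ and limit 0 as b → √2⁻; hence q is a bijection from (√(2/e), √2) onto (0, 1/e). -/

import Mathlib

open Real Filter

/-- `K(b) = -(e-1)b(b²e - 2)/(2 + (e-2)b²e)`. -/
noncomputable def Kfun (b : ℝ) : ℝ :=
  -((Real.exp 1 - 1) * b * (b ^ 2 * Real.exp 1 - 2)) /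
    (2 + (Real.exp 1 - 2) * b ^ 2 * Real.exp 1)

/-- `a(b) = (b²e - 2)/((e-1)b)`. -/
noncomputable def afun (b : ℝ) : ℝ :=
  (b ^ 2 * Real.exp 1 - 2) / ((Real.exp 1 - 1) * b)

/-- `q(b) = (1/2)[b² - K(b)² + K(b)(b - a(b)) - K(b)² log(b/a(b))]`. -/
noncomputable def qfun (b : ℝ) : ℝ :=
  (1 / 2) * (b ^ 2 - (Kfun b) ^ 2 + Kfun b * (b - afun b) -
    (Kfun b) ^ 2 * Real.log (b / afun b))

/-! Write `K = -m a` with `m = (e-1)² b² / (2 + (e-2) e b²)`. Then the only delicate term of `q`,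
`K² log (b/a)`, equals `K² log b - m² a (a log a)`, and `x log x` is continuous at `0`; so `q` is
continuous on `(0, ∞)`. At `b = √(2/e)` we have `a = K = 0`, and at `b = √2` we have `a = -K = √2`,
which gives the values `1/e` and `0` there.

Inside the interval, `q' = -K K' (log (b/a) - (1 - a/b)) + 2 (e-1) (b²e - 2) G / (b D³)` with
`D = 2 + (e-2) e b² > 0` and `G = -e(e-2) b⁴ - 2(e² - 2e + 3) b² + 4 < 0`. Since `K, K' < 0` and
`log x ≥ 1 - 1/x`, `q' < 0`. A continuous strictly decreasing function maps the open interval onto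
the open interval between its endpoint values. -/

open Set Topology

lemma Kfun_denom_pos (b : ℝ) : 0 < 2 + (exp 1 - 2) * b ^ 2 * exp 1 := by
  have := exp_one_gt_two
  positivity

lemma sqrt_two_div_exp_pos : 0 < √(2 / exp 1) := sqrt_pos.2 (by positivity)

lemma two_lt_sq_mul_exp {b : ℝ} (hb : √(2 / exp 1) < b) : 2 < b ^ 2 * exp 1 := by
  rw [← div_lt_iff₀ (exp_pos 1)]
  exact (sqrt_lt' (sqrt_two_div_exp_pos.trans hb)).mp hb

lemma Kfun_eq_mul_afun {b : ℝ} (hb : b ≠ 0) :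
    Kfun b = -((exp 1 - 1) ^ 2 * b ^ 2 / (2 + (exp 1 - 2) * b ^ 2 * exp 1)) * afun b := by
  have he : exp 1 - 1 ≠ 0 := by linarith [exp_one_gt_two]
  rw [Kfun, afun]
  field_simp [(Kfun_denom_pos b).ne']

lemma qfun_eq_of_ne_zero {b : ℝ} (hb : b ≠ 0) :
    qfun b = (1 / 2) * (b ^ 2 + Kfun b * (b - afun b) - Kfun b ^ 2 * (1 + log b)) +
      (1 / 2) * ((exp 1 - 1) ^ 2 * b ^ 2 / (2 + (exp 1 - 2) * b ^ 2 * exp 1)) ^ 2 *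
        (afun b * (afun b * log (afun b))) := by
  rw [qfun]
  by_cases ha : afun b = 0
  · -- `Kfun b = 0` too, so the junk value `log (b / 0)` is multiplied by zero
    rw [Kfun_eq_mul_afun hb, ha]
    ring
  · rw [log_div hb ha, Kfun_eq_mul_afun hb]
    ring

lemma continuousOn_qfun : ContinuousOn qfun (Ioi 0) := by
  have hK : ContinuousOn Kfun (Ioi 0) :=
    ContinuousOn.div (by fun_prop) (by fun_prop) fun b _ ↦ (Kfun_denom_pos b).ne'
  have ha : ContinuousOn afun (Ioi 0) := by
    have := exp_one_gt_two
    refine ContinuousOn.div (by fun_prop) (by fun_prop) fun b hb ↦ ?_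
    exact (mul_pos (by linarith) hb).ne'
  have hm : ContinuousOn (fun b : ℝ ↦
      (exp 1 - 1) ^ 2 * b ^ 2 / (2 + (exp 1 - 2) * b ^ 2 * exp 1)) (Ioi 0) :=
    ContinuousOn.div (by fun_prop) (by fun_prop) fun b _ ↦ (Kfun_denom_pos b).ne'
  have hlog : ContinuousOn log (Ioi 0) := continuousOn_log.mono fun b hb ↦ ne_of_gt hb
  have hxlogx : ContinuousOn (fun b ↦ afun b * log (afun b)) (Ioi 0) :=
    continuous_mul_log.comp_continuousOn ha
  refine ContinuousOn.congr ?_ fun b hb ↦ qfun_eq_of_ne_zero (ne_of_gt hb)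
  fun_prop

lemma qfun_sqrt_two : qfun √2 = 0 := by
  have hs2 : √2 ^ 2 = 2 := sq_sqrt (by norm_num)
  have hs0 : 0 < √2 := sqrt_pos.mpr (by norm_num)
  have he : 0 < exp 1 - 1 := by linarith [exp_one_gt_two]
  have ha : afun √2 = √2 := by
    rw [afun, hs2]
    field_simp
    linear_combination -hs2
  have hK : Kfun √2 = -√2 := by
    rw [Kfun, hs2, show 2 + (exp 1 - 2) * 2 * exp 1 = 2 * (exp 1 - 1) ^ 2 by ring]
    field_simp
  rw [qfun, hK, ha, div_self hs0.ne', log_one]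
  ring

lemma qfun_sqrt_two_div_exp : qfun √(2 / exp 1) = 1 / exp 1 := by
  have hs2 : √(2 / exp 1) ^ 2 = 2 / exp 1 := sq_sqrt (by positivity)
  have hK : Kfun √(2 / exp 1) = 0 := by
    rw [Kfun, hs2, div_mul_cancel₀ _ (exp_pos 1).ne']
    simp
  rw [qfun, hK, hs2]
  ring

noncomputable def Kfun' (b : ℝ) : ℝ :=
  -(exp 1 - 1) * (exp 1 ^ 2 * (exp 1 - 2) * b ^ 4 + 2 * exp 1 * (exp 1 + 1) * b ^ 2 - 4) /
    (2 + (exp 1 - 2) * b ^ 2 * exp 1) ^ 2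

noncomputable def afun' (b : ℝ) : ℝ := (exp 1 * b ^ 2 + 2) / ((exp 1 - 1) * b ^ 2)

noncomputable def qfun' (b : ℝ) : ℝ :=
  (1 / 2) * (2 * b - 2 * Kfun b * Kfun' b * (1 + log (b / afun b)) + Kfun' b * (b - afun b) +
    Kfun b * (1 - afun' b) - Kfun b ^ 2 * (1 / b - afun' b / afun b))

lemma hasDerivAt_sq {𝕜 : Type*} [NontriviallyNormedField 𝕜] (x : 𝕜) :
    HasDerivAt (fun y : 𝕜 ↦ y ^ 2) (2 * x) x := by
  simpa using hasDerivAt_pow 2 x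

lemma hasDerivAt_Kfun (b : ℝ) : HasDerivAt Kfun (Kfun' b) b := by
  have hN := (((hasDerivAt_id' b).const_mul (exp 1 - 1)).fun_mul
    (((hasDerivAt_sq b).mul_const (exp 1)).sub_const 2)).fun_neg
  have hD := (((hasDerivAt_sq b).const_mul (exp 1 - 2)).mul_const (exp 1)).const_add 2
  refine (hN.div hD (Kfun_denom_pos b).ne').congr_deriv ?_
  rw [Kfun']
  field_simp
  ring

lemma hasDerivAt_afun {b : ℝ} (hb : b ≠ 0) : HasDerivAt afun (afun' b) b := by
  have he : exp 1 - 1 ≠ 0 := by linarith [exp_one_gt_two]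
  refine ((((hasDerivAt_sq b).mul_const (exp 1)).sub_const 2).div
    ((hasDerivAt_id' b).const_mul (exp 1 - 1)) (mul_ne_zero he hb)).congr_deriv ?_
  rw [afun']
  field_simp
  ring

lemma hasDerivAt_qfun {b : ℝ} (hb : b ≠ 0) (ha : afun b ≠ 0) :
    HasDerivAt qfun (qfun' b) b := by
  have hK := hasDerivAt_Kfun b
  have ha' := hasDerivAt_afun hb
  have hlog := ((hasDerivAt_id' b).fun_div ha' ha).log (div_ne_zero hb ha)
  refine (((((hasDerivAt_sq b).fun_sub (hK.fun_pow 2)).fun_add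
    (hK.fun_mul ((hasDerivAt_id' b).fun_sub ha'))).fun_sub
      ((hK.fun_pow 2).fun_mul hlog)).const_mul (1 / 2)).congr_deriv ?_
  rw [qfun']
  field_simp
  ring

lemma afun_pos {b : ℝ} (hb : 0 < b) (h : 2 < b ^ 2 * exp 1) : 0 < afun b := by
  have he : 0 < exp 1 - 1 := by linarith [exp_one_gt_two]
  exact div_pos (sub_pos.2 h) (mul_pos he hb)

lemma Kfun_neg {b : ℝ} (hb : 0 < b) (h : 2 < b ^ 2 * exp 1) : Kfun b < 0 := by
  have he : 0 < exp 1 - 1 := by linarith [exp_one_gt_two]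
  exact div_neg_of_neg_of_pos (neg_neg_of_pos (by have := sub_pos.2 h; positivity))
    (Kfun_denom_pos b)

lemma Kfun'_neg {b : ℝ} (h : 2 < b ^ 2 * exp 1) : Kfun' b < 0 := by
  have he := exp_one_gt_two
  have hP : 0 < exp 1 ^ 2 * (exp 1 - 2) * b ^ 4 + 2 * exp 1 * (exp 1 + 1) * b ^ 2 - 4 := by
    have : 0 ≤ exp 1 ^ 2 * (exp 1 - 2) * b ^ 4 := by
      have := sub_pos.2 he
      positivity
    nlinarith
  exact div_neg_of_neg_of_pos (by nlinarith) (by have := Kfun_denom_pos b; positivity)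

lemma qfun'_eq {b : ℝ} (hb : b ≠ 0) (hS : b ^ 2 * exp 1 - 2 ≠ 0) :
    qfun' b = -(Kfun b * Kfun' b) * (log (b / afun b) - (1 - afun b / b)) +
      2 * (exp 1 - 1) * (b ^ 2 * exp 1 - 2) *
        (-(exp 1 * (exp 1 - 2)) * b ^ 4 - 2 * (exp 1 ^ 2 - 2 * exp 1 + 3) * b ^ 2 + 4) /
        (b * (2 + (exp 1 - 2) * b ^ 2 * exp 1) ^ 3) := by
  have he : exp 1 - 1 ≠ 0 := by linarith [exp_one_gt_two]
  have hD : 2 + b ^ 2 * exp 1 * (exp 1 - 2) ≠ 0 := by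
    convert (Kfun_denom_pos b).ne' using 1; ring
  rw [qfun']
  generalize log (b / afun b) = L
  simp only [Kfun', afun', Kfun, afun]
  field_simp
  ring

lemma qfun'_neg {b : ℝ} (hb : 0 < b) (h : 2 < b ^ 2 * exp 1) : qfun' b < 0 := by
  have he := exp_one_gt_two
  rw [qfun'_eq hb.ne' (sub_pos.2 h).ne']
  have hlog : 1 - afun b / b ≤ log (b / afun b) := by
    simpa only [inv_div] using one_sub_inv_le_log_of_pos (div_pos hb (afun_pos hb h))
  have hKK : 0 < Kfun b * Kfun' b := mul_pos_of_neg_of_neg (Kfun_neg hb h) (Kfun'_neg h)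
  have hG : -(exp 1 * (exp 1 - 2)) * b ^ 4 - 2 * (exp 1 ^ 2 - 2 * exp 1 + 3) * b ^ 2 + 4 < 0 := by
    nlinarith [mul_pos (pow_pos hb 4) (mul_pos (exp_pos 1) (sub_pos.2 he)), sq_nonneg (exp 1 - 1)]
  have hrest : 2 * (exp 1 - 1) * (b ^ 2 * exp 1 - 2) *
      (-(exp 1 * (exp 1 - 2)) * b ^ 4 - 2 * (exp 1 ^ 2 - 2 * exp 1 + 3) * b ^ 2 + 4) /
      (b * (2 + (exp 1 - 2) * b ^ 2 * exp 1) ^ 3) < 0 := by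
    have : 0 < 2 * (exp 1 - 1) * (b ^ 2 * exp 1 - 2) := by
      have := sub_pos.2 h
      have : 0 < exp 1 - 1 := by linarith
      positivity
    exact div_neg_of_neg_of_pos (mul_neg_of_pos_of_neg this hG)
      (by have := Kfun_denom_pos b; positivity)
  nlinarith [mul_nonneg hKK.le (sub_nonneg.2 hlog)]

lemma strictAntiOn_qfun : StrictAntiOn qfun (Icc (√(2 / exp 1)) (√2)) := by
  refine strictAntiOn_of_hasDerivWithinAt_neg (f' := qfun') (convex_Icc _ _) ?_ ?_ ?_
  · exact continuousOn_qfun.mono fun b hb ↦ sqrt_two_div_exp_pos.trans_le hb.1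
  · rw [interior_Icc]
    intro b hb
    have hb0 := sqrt_two_div_exp_pos.trans hb.1
    exact (hasDerivAt_qfun hb0.ne' (afun_pos hb0 (two_lt_sq_mul_exp hb.1)).ne').hasDerivWithinAt
  · rw [interior_Icc]
    intro b hb
    exact qfun'_neg (sqrt_two_div_exp_pos.trans hb.1) (two_lt_sq_mul_exp hb.1)

/-- The parametric function `q(b)` is continuous and strictly decreasing on
`(√(2/e), √2)`, tends to `1/e` as `b → √(2/e)⁺` and to `0` as `b → √2⁻`;
hence it is a bijection from `(√(2/e), √2)` onto `(0, 1/e)`. -/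
theorem qfun_strictAnti_bijective :
    ContinuousOn qfun (Set.Ioo (Real.sqrt (2 / Real.exp 1)) (Real.sqrt 2)) ∧
    StrictAntiOn qfun (Set.Ioo (Real.sqrt (2 / Real.exp 1)) (Real.sqrt 2)) ∧
    Filter.Tendsto qfun
      (nhdsWithin (Real.sqrt (2 / Real.exp 1))
        (Set.Ioo (Real.sqrt (2 / Real.exp 1)) (Real.sqrt 2)))
      (nhds (1 / Real.exp 1)) ∧
    Filter.Tendsto qfun
      (nhdsWithin (Real.sqrt 2)
        (Set.Ioo (Real.sqrt (2 / Real.exp 1)) (Real.sqrt 2)))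
      (nhds 0) ∧
    Set.BijOn qfun (Set.Ioo (Real.sqrt (2 / Real.exp 1)) (Real.sqrt 2))
      (Set.Ioo 0 (1 / Real.exp 1)) := by
  have hle : √(2 / exp 1) ≤ √2 :=
    sqrt_le_sqrt (div_le_self zero_le_two (one_le_exp zero_le_one))
  have hcont : ContinuousOn qfun (Icc (√(2 / exp 1)) (√2)) :=
    continuousOn_qfun.mono fun b hb ↦ sqrt_two_div_exp_pos.trans_le hb.1
  have hlim : ∀ b ∈ Icc (√(2 / exp 1)) (√2),
      Tendsto qfun (𝓝[Ioo (√(2 / exp 1)) (√2)] b) (𝓝 (qfun b)) :=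
    fun b hb ↦ (hcont b hb).mono Ioo_subset_Icc_self
  refine ⟨hcont.mono Ioo_subset_Icc_self, strictAntiOn_qfun.mono Ioo_subset_Icc_self,
    qfun_sqrt_two_div_exp ▸ hlim _ (left_mem_Icc.2 hle),
    qfun_sqrt_two ▸ hlim _ (right_mem_Icc.2 hle), ?_⟩
  have := (strictAntiOn_qfun.injOn.mono Ioo_subset_Icc_self).bijOn_image
  rwa [hcont.image_Ioo_of_strictAntiOn hle strictAntiOn_qfun, qfun_sqrt_two,
    qfun_sqrt_two_div_exp] at this
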